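/- If A₁, A₂ ⊆ [0,1] are disjoint intervals and B ⊆ ℝ is a bounded interval, then E[M(A₁) M(A₂) N(B)] = n³λ³μ |A₁||A₂| Q_σ([0,1],B) + n²λ²μ |A₂| Q_σ(A₁,B) + n²λ²μ |A₁| Q_σ(A₂,B). -/

import Mathlib

/-!
Evaluating the Laplace functional at `g = a 𝟙_{A₁} + b 𝟙_{A₂}` and `h = c 𝟙_B` gives the joint
moment generating function of `(M(A₁), M(A₂), N(B))` in the product form
`exp (nλ (φ(c) - 1)) · exp (nλ (eᵃ - 1) φ₁(c)) · exp (nλ (eᵇ - 1) φ₂(c))`, where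
`φ_S(c) = ∫_S exp (μ (eᶜ - 1) q(x)) dx` and `q(x) = ∫_B f_σ(y - x) dy`; disjointness of `A₁` and
`A₂` is what splits `exp ∘ g` into these three terms. Writing `X, Y, Z` for `M(A₁), M(A₂), N(B)`,
dominated convergence gives `E[XYZ]` as the limit of `E[(e^{tX} - 1)(e^{tY} - 1)(e^{tZ} - 1)] / t³`
as `t → 0⁺`, an alternating sum of eight values of the moment generating function. In product form
its leading term only involves `φ_S(0) = |S|` and `φ_S'(0) = μ Q_σ(S, B)`.
-/

open MeasureTheory Filter Set

noncomputable section

/-- Rescaled dispersal density `f_σ(z) = σ⁻¹ f(z/σ)`. -/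
def fdil (σ : ℝ) (f : ℝ → ℝ) (z : ℝ) : ℝ := σ⁻¹ * f (z / σ)

/-- The dispersal point-process model of Hoffmann–Trabs: `M` is a homogeneous Poisson
point process on `[0,1]` with intensity `n·λ·dx` and, conditionally on `M`, `N` is a Cox
point process on `ℝ` with intensity `μ (M ∗ f_σ)(y) dy`.  The joint law is characterized
through the joint Laplace functional (Campbell's formula). -/
structure IsDispersalModel {Ω : Type*} [MeasurableSpace Ω] (P : Measure Ω)
    (n : ℕ) (lam mu σ : ℝ) (f : ℝ → ℝ) (M N : Ω → Measure ℝ) : Prop where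
  prob : IsProbabilityMeasure P
  lam_pos : 0 < lam
  mu_pos : 0 < mu
  sigma_pos : 0 < σ
  sigma_le_one : σ ≤ 1
  f_meas : Measurable f
  f_nonneg : ∀ z, 0 ≤ f z
  f_prob : ∫ z, f z = 1
  M_meas : ∀ A : Set ℝ, MeasurableSet A → Measurable fun ω => M ω A
  N_meas : ∀ B : Set ℝ, MeasurableSet B → Measurable fun ω => N ω B
  M_carrier : ∀ ω, M ω (Set.Icc (0:ℝ) 1)ᶜ = 0
  M_finite : ∀ ω, IsFiniteMeasure (M ω)
  N_locFinite : ∀ ω (B : Set ℝ), Bornology.IsBounded B → N ω B < ⊤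
  laplace : ∀ g h : ℝ → ℝ, Measurable g → Measurable h →
    (∃ c, ∀ x, |g x| ≤ c) → (∃ c, ∀ y, |h y| ≤ c) →
    (∃ R, ∀ y : ℝ, R < |y| → h y = 0) →
    ∫ ω, Real.exp ((∫ x, g x ∂(M ω)) + ∫ y, h y ∂(N ω)) ∂P
      = Real.exp ((n : ℝ) * lam * ∫ x in Set.Icc (0:ℝ) 1,
          (Real.exp (g x + mu * ∫ y, (Real.exp (h y) - 1) * fdil σ f (y - x)) - 1))

/-- `Q_σ(A,B) = ∫_A ∫_B f_σ(y−x) dy dx`. -/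
def Qker (σ : ℝ) (f : ℝ → ℝ) (A B : Set ℝ) : ℝ := ∫ x in A, ∫ y in B, fdil σ f (y - x)

/-- `Q²_σ(A,B₁,B₂) = ∫_A ∫_{B₁} ∫_{B₂} f_σ(y₁−x) f_σ(y₂−x) dy₂ dy₁ dx`. -/
def Q2ker (σ : ℝ) (f : ℝ → ℝ) (A B₁ B₂ : Set ℝ) : ℝ :=
  ∫ x in A, ∫ y₁ in B₁, ∫ y₂ in B₂, fdil σ f (y₁ - x) * fdil σ f (y₂ - x)

end

open Real Filter Topology Asymptotics MeasureTheory Set ProbabilityTheory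

theorem Filter.Tendsto.exp_sub_one_div {α : Type*} {l : Filter α} {δ r : α → ℝ} {L : ℝ}
    (hδ : Tendsto δ l (𝓝 0)) (h : Tendsto (fun t => δ t / r t) l (𝓝 L)) :
    Tendsto (fun t => (Real.exp (δ t) - 1) / r t) l (𝓝 L) := by
  have hexp : (fun x => Real.exp x - 1) ~[𝓝 0] fun x => x := by
    have := hasDerivAt_iff_isLittleO_nhds_zero.1 (hasDerivAt_exp 0)
    simpa [IsEquivalent, Pi.sub_def] using this
  exact ((hexp.comp_tendsto hδ).div IsEquivalent.refl).symm.tendsto_nhds h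

theorem HasDerivAt.tendsto_sub_div {f : ℝ → ℝ} {d : ℝ} (hf : HasDerivAt f d 0) :
    Tendsto (fun t => (f t - f 0) / t) (𝓝[≠] 0) (𝓝 d) := by
  simpa [slope_fun_def_field] using hf.tendsto_slope

theorem HasDerivAt.tendsto_exp_sub_one_div {g : ℝ → ℝ} {d : ℝ} (hg : HasDerivAt g d 0)
    (hg0 : g 0 = 0) : Tendsto (fun t => (Real.exp (g t) - 1) / t) (𝓝[≠] 0) (𝓝 d) := by
  simpa [hg0] using hg.exp.tendsto_sub_div

theorem tendsto_exp_mul_sub_exp_mul_div_sq {ψ : ℝ → ℝ} {κ d w : ℝ} (hψ : HasDerivAt ψ d 0)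
    (hψ0 : ψ 0 = w) :
    Tendsto (fun t => (Real.exp (κ * (Real.exp t - 1) * ψ t)
      - Real.exp (κ * (Real.exp t - 1) * w)) / t ^ 2) (𝓝[≠] 0) (𝓝 (κ * d)) := by
  have hcont : ContinuousAt (fun t => Real.exp t - 1) 0 := by fun_prop
  have hexp : Tendsto (fun t => (Real.exp t - 1) / t) (𝓝[≠] 0) (𝓝 1) := by
    simpa using (hasDerivAt_exp 0).tendsto_sub_div
  have hψ' : Tendsto (fun t => (ψ t - w) / t) (𝓝[≠] 0) (𝓝 d) := hψ0 ▸ hψ.tendsto_sub_div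
  -- The difference is `exp (κ (eᵗ - 1) w) * (exp δ - 1)` with `δ = κ (eᵗ - 1) (ψ t - w) ~ κ d t²`.
  have hδ : Tendsto (fun t => κ * (Real.exp t - 1) * (ψ t - w)) (𝓝[≠] 0) (𝓝 0) := by
    have := ((hcont.const_mul κ).mul (hψ.continuousAt.sub_const w)).tendsto
    simpa [hψ0, Pi.mul_def] using this.mono_left nhdsWithin_le_nhds
  have hratio : Tendsto (fun t => κ * (Real.exp t - 1) * (ψ t - w) / t ^ 2) (𝓝[≠] 0)
      (𝓝 (κ * d)) := by
    have := (hexp.const_mul κ).mul hψ'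
    rw [mul_one] at this
    refine this.congr fun t => ?_
    ring
  have hbase : Tendsto (fun t => Real.exp (κ * (Real.exp t - 1) * w)) (𝓝[≠] 0) (𝓝 1) := by
    have := (((hcont.const_mul κ).mul_const w).rexp).tendsto
    simpa using this.mono_left nhdsWithin_le_nhds
  have := hbase.mul (hδ.exp_sub_one_div hratio)
  rw [one_mul] at this
  refine this.congr fun t => ?_
  rw [mul_div_assoc', mul_sub, mul_one, ← Real.exp_add]
  congr 3
  ring

theorem tendsto_mixed_difference_div_cube {φ φ₁ φ₂ : ℝ → ℝ} {κ d d₁ d₂ w₁ w₂ : ℝ}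
    (hφ : HasDerivAt φ d 0) (hφ₁ : HasDerivAt φ₁ d₁ 0) (hφ₂ : HasDerivAt φ₂ d₂ 0)
    (hφ0 : φ 0 = 1) (hφ₁0 : φ₁ 0 = w₁) (hφ₂0 : φ₂ 0 = w₂) :
    Tendsto (fun t => (Real.exp (κ * (φ t - 1))
        * (Real.exp (κ * (Real.exp t - 1) * φ₁ t) - 1)
        * (Real.exp (κ * (Real.exp t - 1) * φ₂ t) - 1)
        - (Real.exp (κ * (Real.exp t - 1) * w₁) - 1)
        * (Real.exp (κ * (Real.exp t - 1) * w₂) - 1)) / t ^ 3) (𝓝[≠] 0)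
      (𝓝 (κ * d * (κ * w₁) * (κ * w₂) + κ * d₁ * (κ * w₂) + κ * w₁ * (κ * d₂))) := by
  have hfactor {ψ : ℝ → ℝ} {e w : ℝ} (hψ : HasDerivAt ψ e 0) (hψ0 : ψ 0 = w) :
      Tendsto (fun t => (Real.exp (κ * (Real.exp t - 1) * ψ t) - 1) / t) (𝓝[≠] 0)
        (𝓝 (κ * w)) := by
    have h : HasDerivAt (fun t => κ * (Real.exp t - 1) * ψ t)
        (κ * Real.exp 0 * ψ 0 + κ * (Real.exp 0 - 1) * e) 0 :=
      (((hasDerivAt_exp 0).sub_const 1).const_mul κ).mul hψ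
    exact HasDerivAt.tendsto_exp_sub_one_div (by simpa [hψ0] using h) (by simp)
  have hp : Tendsto (fun t => (Real.exp (κ * (φ t - 1)) - 1) / t) (𝓝[≠] 0) (𝓝 (κ * d)) :=
    ((hφ.sub_const 1).const_mul κ).tendsto_exp_sub_one_div (by simp [hφ0])
  have he₁ := hfactor hφ₁ hφ₁0
  have he₂ := hfactor hφ₂ hφ₂0
  have hb₁ := hfactor (hasDerivAt_const 0 w₁) rfl
  have hD₁ := tendsto_exp_mul_sub_exp_mul_div_sq (κ := κ) hφ₁ hφ₁0
  have hD₂ := tendsto_exp_mul_sub_exp_mul_div_sq (κ := κ) hφ₂ hφ₂0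
  -- With `p = exp (κ (φ - 1))`, `eᵢ = exp (κ (eᵗ - 1) φᵢ)`, `bᵢ = exp (κ (eᵗ - 1) wᵢ)`:
  -- `p (e₁ - 1) (e₂ - 1) - (b₁ - 1) (b₂ - 1)`
  --   `= (p - 1) (e₁ - 1) (e₂ - 1) + (e₁ - b₁) (e₂ - 1) + (b₁ - 1) (e₂ - b₂)`.
  refine (((hp.mul he₁).mul he₂).add (hD₁.mul he₂) |>.add (hb₁.mul hD₂)).congr' ?_
  filter_upwards [self_mem_nhdsWithin] with t (ht : t ≠ 0)
  field_simp
  ring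

theorem exp_mul_sub_one_div_le {t : ℝ} (x : ℝ) (ht0 : 0 < t) (ht1 : t ≤ 1) :
    (Real.exp (t * x) - 1) / t ≤ Real.exp x - 1 := by
  have h := convexOn_exp.2 (mem_univ x) (mem_univ 0) ht0.le (sub_nonneg.2 ht1) (by ring)
  simp only [smul_eq_mul, mul_zero, add_zero, Real.exp_zero, mul_one] at h
  rw [div_le_iff₀ ht0]
  linarith

theorem tendsto_integral_prod_exp_sub_one_div_cube {Ω : Type*} [MeasurableSpace Ω]
    {P : Measure Ω} {X Y Z : Ω → ℝ} (hX : Measurable X) (hY : Measurable Y) (hZ : Measurable Z)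
    (hX0 : ∀ ω, 0 ≤ X ω) (hY0 : ∀ ω, 0 ≤ Y ω) (hZ0 : ∀ ω, 0 ≤ Z ω)
    (hint : Integrable (fun ω => Real.exp (X ω + Y ω + Z ω)) P) :
    Tendsto (fun t => (∫ ω, (Real.exp (t * X ω) - 1) * (Real.exp (t * Y ω) - 1)
        * (Real.exp (t * Z ω) - 1) ∂P) / t ^ 3) (𝓝[>] 0) (𝓝 (∫ ω, X ω * Y ω * Z ω ∂P)) := by
  have hfactor_nonneg {t x : ℝ} (ht : 0 < t) (hx : 0 ≤ x) : 0 ≤ (Real.exp (t * x) - 1) / t :=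
    div_nonneg (sub_nonneg.2 (one_le_exp (by positivity))) ht.le
  have hfactor_le {t x : ℝ} (ht0 : 0 < t) (ht1 : t ≤ 1) : (Real.exp (t * x) - 1) / t ≤ Real.exp x :=
    (exp_mul_sub_one_div_le x ht0 ht1).trans (by linarith)
  have hfactor_lim (x : ℝ) : Tendsto (fun t => (Real.exp (t * x) - 1) / t) (𝓝[>] 0) (𝓝 x) :=
    ((hasDerivAt_mul_const x).tendsto_exp_sub_one_div (zero_mul x)).mono_left
      (nhdsGT_le_nhdsNE 0)
  have hsplit (a b c t : ℝ) : a * b * c / t ^ 3 = a / t * (b / t) * (c / t) := by ring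
  simp_rw [← integral_div]
  refine tendsto_integral_filter_of_dominated_convergence (fun ω => Real.exp (X ω + Y ω + Z ω))
    (Eventually.of_forall fun t => by fun_prop) ?_ hint (ae_of_all _ fun ω => ?_)
  · filter_upwards [Ioc_mem_nhdsGT zero_lt_one] with t ⟨ht0, ht1⟩
    refine ae_of_all _ fun ω => ?_
    have := hfactor_nonneg ht0 (hX0 ω)
    have := hfactor_nonneg ht0 (hY0 ω)
    have := hfactor_nonneg ht0 (hZ0 ω)
    rw [hsplit, Real.norm_eq_abs, abs_of_nonneg (by positivity), Real.exp_add, Real.exp_add]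
    gcongr <;> exact hfactor_le ht0 ht1
  · refine (((hfactor_lim (X ω)).mul (hfactor_lim (Y ω))).mul (hfactor_lim (Z ω))).congr fun t => ?_
    rw [hsplit]

noncomputable def jointMgf {Ω : Type*} [MeasurableSpace Ω] (X Y Z : Ω → ℝ) (P : Measure Ω)
    (a b c : ℝ) : ℝ :=
  ∫ ω, Real.exp (a * X ω + b * Y ω + c * Z ω) ∂P

theorem integral_prod_exp_sub_one_eq_jointMgf {Ω : Type*} [MeasurableSpace Ω] {P : Measure Ω}
    {X Y Z : Ω → ℝ}
    (hint : ∀ a b c, Integrable (fun ω => Real.exp (a * X ω + b * Y ω + c * Z ω)) P) (t : ℝ) :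
    ∫ ω, (Real.exp (t * X ω) - 1) * (Real.exp (t * Y ω) - 1) * (Real.exp (t * Z ω) - 1) ∂P
      = jointMgf X Y Z P t t t - jointMgf X Y Z P t t 0 - jointMgf X Y Z P t 0 t
        - jointMgf X Y Z P 0 t t + jointMgf X Y Z P t 0 0 + jointMgf X Y Z P 0 t 0
        + jointMgf X Y Z P 0 0 t - jointMgf X Y Z P 0 0 0 := by
  set E : ℝ → ℝ → ℝ → Ω → ℝ := fun a b c ω => Real.exp (a * X ω + b * Y ω + c * Z ω)
  have hE : (fun ω => (Real.exp (t * X ω) - 1) * (Real.exp (t * Y ω) - 1)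
      * (Real.exp (t * Z ω) - 1)) = E t t t - E t t 0 - E t 0 t - E 0 t t + E t 0 0 + E 0 t 0
        + E 0 0 t - E 0 0 0 := by
    ext ω
    simp only [E, Pi.add_apply, Pi.sub_apply, zero_mul, Real.exp_add, Real.exp_zero]
    ring
  have hint' : ∀ a b c, Integrable (E a b c) P := hint
  rw [hE, integral_sub', integral_add', integral_add', integral_add', integral_sub',
    integral_sub', integral_sub']
  all_goals repeat (first | exact hint' _ _ _ | apply Integrable.sub | apply Integrable.add)
  rfl

theorem hasDerivAt_mgf_of_mem_Icc {α : Type*} [MeasurableSpace α] {ν : Measure α}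
    [IsFiniteMeasure ν] {q : α → ℝ} {a b : ℝ} (hq : AEMeasurable q ν)
    (hab : ∀ᵐ x ∂ν, q x ∈ Icc a b) (t : ℝ) :
    HasDerivAt (mgf q ν) (∫ x, q x * Real.exp (t * q x) ∂ν) t := by
  have hexp : integrableExpSet q ν = univ :=
    eq_univ_of_forall fun _ => integrable_exp_mul_of_mem_Icc hq hab
  exact hasDerivAt_mgf (by simp [hexp])

theorem setIntegral_exp_indicator_add_indicator_add_sub_one {α : Type*} [MeasurableSpace α]
    {ν : Measure α} {S A₁ A₂ : Set α} (hA₁ : MeasurableSet A₁) (hA₂ : MeasurableSet A₂)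
    (h₁ : A₁ ⊆ S) (h₂ : A₂ ⊆ S) (hdisj : Disjoint A₁ A₂) (hS : ν S ≠ ⊤) {φ : α → ℝ}
    (hφ : IntegrableOn (fun x => Real.exp (φ x)) S ν) (a b : ℝ) :
    ∫ x in S, (Real.exp (A₁.indicator (fun _ => a) x + A₂.indicator (fun _ => b) x + φ x) - 1) ∂ν
      = (∫ x in S, Real.exp (φ x) ∂ν) - ν.real S
        + (Real.exp a - 1) * (∫ x in A₁, Real.exp (φ x) ∂ν)
        + (Real.exp b - 1) * ∫ x in A₂, Real.exp (φ x) ∂ν := by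
  set ψ := fun x => Real.exp (φ x)
  have hpt (x : α) : Real.exp (A₁.indicator (fun _ => a) x + A₂.indicator (fun _ => b) x + φ x) - 1
      = (ψ x - 1) + A₁.indicator (fun x => (Real.exp a - 1) * ψ x) x
        + A₂.indicator (fun x => (Real.exp b - 1) * ψ x) x := by
    rw [Real.exp_add]
    by_cases hx₁ : x ∈ A₁ <;> by_cases hx₂ : x ∈ A₂
    · exact absurd hx₂ (disjoint_left.1 hdisj hx₁)
    all_goals simp only [hx₁, hx₂, indicator_of_mem, indicator_of_notMem, not_false_eq_true,
      add_zero, zero_add, Real.exp_zero]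
    all_goals ring
  have hone : IntegrableOn (fun _ => (1 : ℝ)) S ν := integrableOn_const hS
  have hψ₀ : IntegrableOn (fun x => ψ x - 1) S ν := hφ.sub hone
  have hψ₁ := (hφ.const_mul (Real.exp a - 1)).indicator hA₁
  have hψ₂ := (hφ.const_mul (Real.exp b - 1)).indicator hA₂
  have hψ₀₁ : IntegrableOn
      (fun x => ψ x - 1 + A₁.indicator (fun x => (Real.exp a - 1) * ψ x) x) S ν :=
    hψ₀.add hψ₁
  rw [integral_congr_ae (ae_of_all _ hpt), integral_add hψ₀₁ hψ₂, integral_add hψ₀ hψ₁,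
    integral_sub hφ hone, setIntegral_indicator hA₁, setIntegral_indicator hA₂,
    inter_eq_self_of_subset_right h₁, inter_eq_self_of_subset_right h₂, integral_const_mul,
    integral_const_mul]
  simp

noncomputable def fdilMass (σ : ℝ) (f : ℝ → ℝ) (B : Set ℝ) (x : ℝ) : ℝ :=
  ∫ y in B, fdil σ f (y - x)

section Dilation

variable {σ : ℝ} {f : ℝ → ℝ}

theorem measurable_fdil (hf : Measurable f) : Measurable (fdil σ f) := by
  unfold fdil; fun_prop

theorem fdil_nonneg (hσ : 0 ≤ σ) (hf : ∀ z, 0 ≤ f z) (z : ℝ) :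
    0 ≤ fdil σ f z :=
  mul_nonneg (inv_nonneg.2 hσ) (hf _)

theorem integral_fdil (hσ : 0 < σ) (hf : ∫ z, f z = 1) :
    ∫ z, fdil σ f z = 1 := by
  simp [fdil, integral_const_mul, Measure.integral_comp_div, hf, abs_of_pos hσ, hσ.ne']

theorem measurable_fdilMass (hf : Measurable f) (B : Set ℝ) :
    Measurable (fdilMass σ f B) :=
  ((measurable_fdil hf).comp (measurable_snd.sub measurable_fst)).stronglyMeasurable
    |>.integral_prod_right' (ν := volume.restrict B) |>.measurable

theorem fdilMass_mem_Icc (hσ : 0 < σ) (hf0 : ∀ z, 0 ≤ f z)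
    (hf : ∫ z, f z = 1) (B : Set ℝ) (x : ℝ) : fdilMass σ f B x ∈ Icc 0 1 := by
  have hfi : Integrable f := by
    by_contra h
    simp [integral_undef h] at hf
  have hint : Integrable (fun y => fdil σ f (y - x)) :=
    ((hfi.comp_div hσ.ne').const_mul _).comp_sub_right x
  refine ⟨setIntegral_nonneg_of_ae_restrict (ae_of_all _ fun _ => fdil_nonneg hσ.le hf0 _), ?_⟩
  calc fdilMass σ f B x ≤ ∫ y, fdil σ f (y - x) :=
        setIntegral_le_integral hint (ae_of_all _ fun _ => fdil_nonneg hσ.le hf0 _)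
    _ = 1 := by rw [integral_sub_right_eq_self (fdil σ f) x, integral_fdil hσ hf]

theorem integral_exp_indicator_sub_one_mul_fdil {B : Set ℝ}
    (hB : MeasurableSet B) (c x : ℝ) :
    ∫ y, (Real.exp (B.indicator (fun _ => c) y) - 1) * fdil σ f (y - x)
      = (Real.exp c - 1) * fdilMass σ f B x := by
  have : (fun y => (Real.exp (B.indicator (fun _ => c) y) - 1) * fdil σ f (y - x))
      = B.indicator fun y => (Real.exp c - 1) * fdil σ f (y - x) := by
    ext y
    by_cases hy : y ∈ B <;> simp [hy]
  rw [this, integral_indicator hB, integral_const_mul, fdilMass]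

theorem hasDerivAt_mgf_fdilMass {mu : ℝ} (hσ : 0 < σ) (hf : Measurable f)
    (hf0 : ∀ z, 0 ≤ f z) (hf1 : ∫ z, f z = 1) (B : Set ℝ) {S : Set ℝ} (hS : volume S ≠ ⊤) :
    HasDerivAt (fun c => mgf (fdilMass σ f B) (volume.restrict S) (mu * (Real.exp c - 1)))
      (mu * Qker σ f S B) 0 := by
  have := isFiniteMeasure_restrict.2 hS
  have hmgf := hasDerivAt_mgf_of_mem_Icc (ν := volume.restrict S)
    (measurable_fdilMass hf B).aemeasurable
    (ae_of_all _ (fdilMass_mem_Icc hσ hf0 hf1 B)) 0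
  have hu : HasDerivAt (fun c => mu * (Real.exp c - 1)) (mu * Real.exp 0) 0 :=
    ((hasDerivAt_exp 0).sub_const 1).const_mul mu
  simpa [Qker, fdilMass, mul_comm, Function.comp_def] using hmgf.comp_of_eq 0 hu (by simp)

end Dilation

namespace IsDispersalModel

variable {Ω : Type*} [MeasurableSpace Ω] {P : Measure Ω} {n : ℕ} {lam mu σ : ℝ} {f : ℝ → ℝ}
  {M N : Ω → Measure ℝ} {A₁ A₂ B : Set ℝ}

theorem integral_exp_indicator (model : IsDispersalModel P n lam mu σ f M N)
    (hA₁ : MeasurableSet A₁) (hA₂ : MeasurableSet A₂) (hB : MeasurableSet B)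
    (hBbdd : Bornology.IsBounded B) (a b c : ℝ) :
    ∫ ω, Real.exp (a * (M ω A₁).toReal + b * (M ω A₂).toReal + c * (N ω B).toReal) ∂P
      = Real.exp (n * lam * ∫ x in Icc 0 1, (Real.exp (A₁.indicator (fun _ => a) x
          + A₂.indicator (fun _ => b) x + mu * (Real.exp c - 1) * fdilMass σ f B x) - 1)) := by
  have habs (s : Set ℝ) (k x : ℝ) : |s.indicator (fun _ => k) x| ≤ |k| := by
    simpa using norm_indicator_le_norm_self (fun _ : ℝ => k) (s := s) x
  have hsupp : ∃ R, ∀ y : ℝ, R < |y| → B.indicator (fun _ => c) y = 0 := by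
    obtain ⟨R, hR⟩ := hBbdd.subset_closedBall 0
    refine ⟨R, fun y hy => indicator_of_notMem (fun hyB => ?_) _⟩
    have := hR hyB
    rw [Metric.mem_closedBall, Real.dist_eq, sub_zero] at this
    linarith
  have hM (ω : Ω) : ∫ x, A₁.indicator (fun _ => a) x + A₂.indicator (fun _ => b) x ∂(M ω)
      = a * (M ω A₁).toReal + b * (M ω A₂).toReal := by
    have := model.M_finite ω
    rw [integral_add ((integrable_const a).indicator hA₁) ((integrable_const b).indicator hA₂),
      integral_indicator_const _ hA₁, integral_indicator_const _ hA₂]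
    simp [measureReal_def, mul_comm]
  have hN (ω : Ω) : ∫ y, B.indicator (fun _ => c) y ∂(N ω) = c * (N ω B).toReal := by
    rw [integral_indicator_const _ hB]
    simp [measureReal_def, mul_comm]
  have hlap := model.laplace (fun x => A₁.indicator (fun _ => a) x + A₂.indicator (fun _ => b) x)
    (B.indicator fun _ => c) (by fun_prop (disch := assumption)) (by fun_prop (disch := assumption))
    ⟨|a| + |b|, fun x => (abs_add_le _ _).trans (add_le_add (habs A₁ a x) (habs A₂ b x))⟩
    ⟨|c|, habs B c⟩ hsupp
  simpa only [hM, hN, integral_exp_indicator_sub_one_mul_fdil hB, ← mul_assoc] using hlap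

theorem jointMgf_eq (model : IsDispersalModel P n lam mu σ f M N)
    (hA₁ : MeasurableSet A₁) (hA₂ : MeasurableSet A₂)
    (h₁ : A₁ ⊆ Icc 0 1) (h₂ : A₂ ⊆ Icc 0 1) (hdisj : Disjoint A₁ A₂)
    (hB : MeasurableSet B) (hBbdd : Bornology.IsBounded B) (a b c : ℝ) :
    jointMgf (fun ω => (M ω A₁).toReal) (fun ω => (M ω A₂).toReal) (fun ω => (N ω B).toReal) P
        a b c
      = Real.exp (n * lam * (mgf (fdilMass σ f B) (volume.restrict (Icc 0 1))
            (mu * (Real.exp c - 1)) - 1))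
        * Real.exp (n * lam * (Real.exp a - 1)
            * mgf (fdilMass σ f B) (volume.restrict A₁) (mu * (Real.exp c - 1)))
        * Real.exp (n * lam * (Real.exp b - 1)
            * mgf (fdilMass σ f B) (volume.restrict A₂) (mu * (Real.exp c - 1))) := by
  have : IsFiniteMeasure (volume.restrict (Icc (0 : ℝ) 1)) := isFiniteMeasure_restrict.2 (by simp)
  have hψ : IntegrableOn (fun x => Real.exp (mu * (Real.exp c - 1) * fdilMass σ f B x)) (Icc 0 1) :=
    integrable_exp_mul_of_mem_Icc (measurable_fdilMass model.f_meas B).aemeasurable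
      (ae_of_all _ (fdilMass_mem_Icc model.sigma_pos model.f_nonneg model.f_prob B))
  rw [jointMgf, model.integral_exp_indicator hA₁ hA₂ hB hBbdd,
    setIntegral_exp_indicator_add_indicator_add_sub_one hA₁ hA₂ h₁ h₂ hdisj (by simp) hψ,
    ← Real.exp_add, ← Real.exp_add]
  simp only [mgf, Real.volume_real_Icc, sub_zero, zero_le_one, max_eq_left]
  congr 1
  ring

end IsDispersalModel

theorem dispersal_third_moment_MMN_general
    {Ω : Type*} [MeasurableSpace Ω] (P : Measure Ω)
    (n : ℕ) (lam mu σ : ℝ) (f : ℝ → ℝ) (M N : Ω → Measure ℝ)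
    (model : IsDispersalModel P n lam mu σ f M N)
    (A₁ A₂ B : Set ℝ)
    (hA₁meas : MeasurableSet A₁) (hA₂meas : MeasurableSet A₂)
    (hA₁sub : A₁ ⊆ Set.Icc (0:ℝ) 1) (hA₂sub : A₂ ⊆ Set.Icc (0:ℝ) 1)
    (hAdisj : Disjoint A₁ A₂)
    (hBmeas : MeasurableSet B) (hBbdd : Bornology.IsBounded B) :
    ∫ ω, (M ω A₁).toReal * (M ω A₂).toReal * (N ω B).toReal ∂P
      = (n : ℝ)^3 * lam^3 * mu * (volume A₁).toReal * (volume A₂).toReal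
          * Qker σ f (Set.Icc (0:ℝ) 1) B
        + (n : ℝ)^2 * lam^2 * mu * (volume A₂).toReal * Qker σ f A₁ B
        + (n : ℝ)^2 * lam^2 * mu * (volume A₁).toReal * Qker σ f A₂ B := by
  have hmgf := model.jointMgf_eq hA₁meas hA₂meas hA₁sub hA₂sub hAdisj hBmeas hBbdd
  have hint (a b c : ℝ) : Integrable (fun ω => Real.exp (a * (M ω A₁).toReal
      + b * (M ω A₂).toReal + c * (N ω B).toReal)) P :=
    Integrable.of_integral_ne_zero (by rw [← jointMgf, hmgf]; positivity)
  have hmgf0 (S : Set ℝ) :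
      mgf (fdilMass σ f B) (volume.restrict S) (mu * (Real.exp 0 - 1)) = (volume S).toReal := by
    simp [mgf, measureReal_def]
  have hderiv {S : Set ℝ} (hS : S ⊆ Icc 0 1) := hasDerivAt_mgf_fdilMass (mu := mu)
    model.sigma_pos model.f_meas model.f_nonneg model.f_prob B
    (ne_top_of_le_ne_top (by simp) (measure_mono hS))
  have hdiff := tendsto_mixed_difference_div_cube (κ := n * lam) (hderiv subset_rfl)
    (hderiv hA₁sub) (hderiv hA₂sub) (by simp [mgf]) (hmgf0 A₁) (hmgf0 A₂)
  have hmoment := tendsto_integral_prod_exp_sub_one_div_cube (P := P)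
    (model.M_meas A₁ hA₁meas).ennreal_toReal (model.M_meas A₂ hA₂meas).ennreal_toReal
    (model.N_meas B hBmeas).ennreal_toReal (fun _ => ENNReal.toReal_nonneg)
    (fun _ => ENNReal.toReal_nonneg) (fun _ => ENNReal.toReal_nonneg) (by simpa using hint 1 1 1)
  rw [tendsto_nhds_unique hmoment ((hdiff.mono_left (nhdsGT_le_nhdsNE 0)).congr fun t => ?_)]
  · ring
  simp only [integral_prod_exp_sub_one_eq_jointMgf hint, hmgf, hmgf0]
  simp only [Real.exp_zero, sub_self, zero_mul, mul_zero, Real.volume_Icc, sub_zero,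
    ENNReal.ofReal_one, ENNReal.toReal_one]
  ring

/-- Lemma 16(ii): mixed third moment `E[M(A₁)M(A₂)N(B)]`. -/
theorem dispersal_third_moment_MMN
    {Ω : Type*} [MeasurableSpace Ω] (P : Measure Ω)
    (n : ℕ) (lam mu σ : ℝ) (f : ℝ → ℝ) (M N : Ω → Measure ℝ)
    (model : IsDispersalModel P n lam mu σ f M N)
    (A₁ A₂ B : Set ℝ)
    (hA₁meas : MeasurableSet A₁) (hA₂meas : MeasurableSet A₂)
    (hA₁int : A₁.OrdConnected) (hA₂int : A₂.OrdConnected)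
    (hA₁sub : A₁ ⊆ Set.Icc (0:ℝ) 1) (hA₂sub : A₂ ⊆ Set.Icc (0:ℝ) 1)
    (hAdisj : Disjoint A₁ A₂)
    (hBmeas : MeasurableSet B) (hBint : B.OrdConnected) (hBbdd : Bornology.IsBounded B) :
    ∫ ω, (M ω A₁).toReal * (M ω A₂).toReal * (N ω B).toReal ∂P
      = (n : ℝ)^3 * lam^3 * mu * (volume A₁).toReal * (volume A₂).toReal
          * Qker σ f (Set.Icc (0:ℝ) 1) B
        + (n : ℝ)^2 * lam^2 * mu * (volume A₂).toReal * Qker σ f A₁ B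
        + (n : ℝ)^2 * lam^2 * mu * (volume A₁).toReal * Qker σ f A₂ B :=
  dispersal_third_moment_MMN_general P n lam mu σ f M N model A₁ A₂ B hA₁meas hA₂meas hA₁sub hA₂sub
    hAdisj hBmeas hBbdd
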